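/- arXiv:2111.02753 — 3 statements merged into one kernel-verified Lean document; each statement's English description precedes it below -/
import Mathlib

section
/- Let N ≥ 1 and α > 0, and let u₀ ∈ L¹(ℝ^N) ∩ L²(ℝ^N). Define the Fourier transform û₀(ω) = (2π)^{-N/2} ∫_{ℝ^N} u₀(x) e^{-i ω·x} dx, the solution u(t,x) = (2π)^{-N/2} ∫_{ℝ^N} e^{-t|ω|^{2α}} û₀(ω) e^{i ω·x} dω for t > 0, and the rescaling factors c_t = (2π)^N t^{N/(2α)} / M_α where M_α = ∫_{ℝ^N} e^{-|s|^{2α}} ds. Then for every compact set K ⊆ ℝ^N, c_t u(t,x) converges to ∫_{ℝ^N} u₀(y) dy as t → ∞, uniformly with respect to x ∈ K. -/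
/-!
Substituting `ω = t ^ (-1/(2α)) • s` turns `c t * u t x` into `(2π)^(N/2) / M` times
`Φ (t ^ (-1/(2α))) x`, where `Φ ε x = ∫ e^{-‖s‖^{2α}} û₀(ε s) e^{i⟨ε s, x⟩} ds` is
`rescaledHeatProfile`. Since `û₀` is continuous and bounded by `(2π)^(-N/2) ‖u₀‖₁`, dominated
convergence makes `Φ` jointly continuous in `(ε, x)`, hence `Φ ε → Φ 0` uniformly on compact sets
as `ε → 0`, and `Φ 0 = M û₀(0) = M (2π)^(-N/2) ∫ u₀`.
-/

open MeasureTheory Filter Real Complex Topology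

theorem Continuous.tendstoUniformlyOn_of_isCompact {α β γ : Type*} [UniformSpace α]
    [WeaklyLocallyCompactSpace α] [UniformSpace β] [UniformSpace γ] {F : α → β → γ}
    (hF : Continuous ↿F) {K : Set β} (hK : IsCompact K) (a : α) :
    TendstoUniformlyOn F (F a) (𝓝 a) K := by
  obtain ⟨U, hU, hUa⟩ := exists_compact_mem_nhds a
  have hFU := (hU.prod hK).uniformContinuousOn_of_continuous hF.continuousOn
  simpa only [nhdsWithin_eq_nhds.2 hUa] using hFU.tendstoUniformlyOn (mem_of_mem_nhds hUa)

theorem TendstoUniformlyOn.comp_tendsto {ι ι' α β : Type*} [UniformSpace β]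
    {F : ι → α → β} {f : α → β} {p : Filter ι} {s : Set α} (h : TendstoUniformlyOn F f p s)
    {l : Filter ι'} {g : ι' → ι} (hg : Tendsto g l p) :
    TendstoUniformlyOn (fun i => F (g i)) f l s :=
  fun u hu => hg.eventually (h u hu)

section Haar

variable {E : Type*} [NormedAddCommGroup E] [NormedSpace ℝ E] [FiniteDimensional ℝ E]
  [MeasurableSpace E] [BorelSpace E] (μ : Measure E) [μ.IsAddHaarMeasure] {p : ℝ}

theorem integral_exp_neg_norm_rpow_pos (hp : 0 < p) : 0 < ∫ x, rexp (-‖x‖ ^ p) ∂μ := by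
  have hball := Metric.measure_ball_pos μ (0 : E) one_pos
  rw [measure_unitBall_eq_integral_div_gamma μ hp, ENNReal.ofReal_pos] at hball
  exact (div_pos_iff_of_pos_right (Real.Gamma_pos_of_pos (by positivity))).mp hball

theorem integrable_exp_neg_norm_rpow (hp : 0 < p) : Integrable (fun x => rexp (-‖x‖ ^ p)) μ :=
  Integrable.of_integral_ne_zero (integral_exp_neg_norm_rpow_pos μ hp).ne'

theorem integral_exp_neg_mul_norm_rpow_mul (hp : 0 < p) {t : ℝ} (ht : 0 < t) (f : E → ℂ) :
    ∫ ω, (rexp (-(t * ‖ω‖ ^ p)) : ℂ) * f ω ∂μ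
      = ((t ^ (-(Module.finrank ℝ E / p)) : ℝ) : ℂ)
        * ∫ s, (rexp (-‖s‖ ^ p) : ℂ) * f (t ^ (-(1 / p)) • s) ∂μ := by
  set ε := t ^ (-(1 / p))
  have hε : 0 < ε := Real.rpow_pos_of_pos ht _
  have hscale : ∀ s : E, t * ‖ε • s‖ ^ p = ‖s‖ ^ p := fun s => by
    rw [norm_smul, Real.norm_of_nonneg hε.le, Real.mul_rpow hε.le (norm_nonneg s),
      ← Real.rpow_mul ht.le, neg_mul, one_div_mul_cancel hp.ne', Real.rpow_neg_one, ← mul_assoc,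
      mul_inv_cancel₀ ht.ne', one_mul]
  have hcoef : (ε ^ Module.finrank ℝ E : ℝ) = t ^ (-(Module.finrank ℝ E / p)) := by
    rw [← Real.rpow_natCast, ← Real.rpow_mul ht.le]; ring_nf
  have := Measure.integral_comp_smul_of_nonneg μ
    (fun ω => (rexp (-(t * ‖ω‖ ^ p)) : ℂ) * f ω) ε (hR := hε.le)
  simp only [hscale] at this
  rw [this, ← hcoef, Complex.real_smul, ← mul_assoc, ← Complex.ofReal_mul,
    mul_inv_cancel₀ (pow_ne_zero _ hε.ne'), Complex.ofReal_one, one_mul]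

end Haar

section PlaneWave

variable {E : Type*} [NormedAddCommGroup E] [InnerProductSpace ℝ E] [MeasurableSpace E]
  {μ : Measure E} {f : E → ℂ}

theorem norm_integral_mul_exp_neg_inner_le (ω : E) :
    ‖∫ x, f x * cexp (-(I * (inner ℝ ω x : ℂ))) ∂μ‖ ≤ ∫ x, ‖f x‖ ∂μ :=
  (norm_integral_le_integral_norm _).trans_eq <| by simp [Complex.norm_exp]

theorem continuous_integral_mul_exp_neg_inner [OpensMeasurableSpace E] (hf : Integrable f μ) :
    Continuous fun ω => ∫ x, f x * cexp (-(I * (inner ℝ ω x : ℂ))) ∂μ :=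
  continuous_of_dominated
    (fun _ => hf.aestronglyMeasurable.mul (Continuous.aestronglyMeasurable (by fun_prop)))
    (fun _ => ae_of_all _ fun _ => by simp [Complex.norm_exp]) hf.norm
    (ae_of_all _ fun _ => by fun_prop)

end PlaneWave

theorem continuous_integral_mul_comp_smul {E X : Type*} [NormedAddCommGroup E]
    [NormedSpace ℝ E] [MeasurableSpace E] [OpensMeasurableSpace E] {μ : Measure E}
    [TopologicalSpace X] [FirstCountableTopology X] {w : E → ℂ} (hw : Integrable w μ)
    {h : E → X → ℂ} (hh : Continuous ↿h) {C : ℝ} (hC : ∀ ω x, ‖h ω x‖ ≤ C) :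
    Continuous fun q : ℝ × X => ∫ s, w s * h (q.1 • s) q.2 ∂μ := by
  have hcont : ∀ s, Continuous fun q : ℝ × X => h (q.1 • s) q.2 := fun s =>
    hh.comp ((continuous_fst.smul continuous_const).prodMk continuous_snd)
  refine continuous_of_dominated (bound := fun s => ‖w s‖ * C)
    (fun q => hw.aestronglyMeasurable.mul ?_) (fun q => ae_of_all _ fun s => ?_)
    (hw.norm.mul_const C) (ae_of_all _ fun s => continuous_const.mul (hcont s))
  · exact (hh.comp ((continuous_const_smul q.1).prodMk continuous_const)).aestronglyMeasurable
  · rw [norm_mul]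
    exact mul_le_mul_of_nonneg_left (hC _ _) (norm_nonneg _)

section RescaledHeatProfile

variable {E : Type*} [NormedAddCommGroup E] [InnerProductSpace ℝ E] [MeasurableSpace E]
  (μ : Measure E) {p : ℝ} {g : E → ℂ}

noncomputable def rescaledHeatProfile (p : ℝ) (g : E → ℂ) (e : ℝ) (x : E) : ℂ :=
  ∫ s, (rexp (-‖s‖ ^ p) : ℂ) * (g (e • s) * cexp (I * (inner ℝ (e • s) x : ℂ))) ∂μ

theorem rescaledHeatProfile_zero (x : E) :
    rescaledHeatProfile μ p g 0 x = ((∫ s, rexp (-‖s‖ ^ p) ∂μ : ℝ) : ℂ) * g 0 := by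
  simp only [rescaledHeatProfile, zero_smul, inner_zero_left, ofReal_zero, mul_zero,
    Complex.exp_zero, mul_one]
  rw [integral_mul_const, integral_complex_ofReal]

variable [FiniteDimensional ℝ E] [BorelSpace E] [μ.IsAddHaarMeasure]

theorem integral_heat_eq_rescaledHeatProfile (hp : 0 < p) {t : ℝ} (ht : 0 < t) (x : E) :
    ∫ ω, (rexp (-(t * ‖ω‖ ^ p)) : ℂ) * g ω * cexp (I * (inner ℝ ω x : ℂ)) ∂μ
      = ((t ^ (-(Module.finrank ℝ E / p)) : ℝ) : ℂ)
        * rescaledHeatProfile μ p g (t ^ (-(1 / p))) x := by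
  simp only [mul_assoc]
  exact integral_exp_neg_mul_norm_rpow_mul μ hp ht _

theorem continuous_rescaledHeatProfile (hp : 0 < p) (hg : Continuous g) {C : ℝ}
    (hC : ∀ ω, ‖g ω‖ ≤ C) : Continuous ↿(rescaledHeatProfile μ p g) :=
  continuous_integral_mul_comp_smul (integrable_exp_neg_norm_rpow μ hp).ofReal
    (h := fun ω x => g ω * cexp (I * (inner ℝ ω x : ℂ))) (by fun_prop)
    (fun ω x => by simpa [Complex.norm_exp] using hC ω)

end RescaledHeatProfile

theorem heat_scaling_constant {N : ℕ} {a t : ℝ} (ht : 0 < t) (M : ℝ) :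
    (2 * π) ^ N * t ^ a / M * (2 * π) ^ (-(N : ℝ) / 2) * t ^ (-a)
      = (2 * π) ^ ((N : ℝ) / 2) / M := by
  have h2π : 0 < 2 * π := by positivity
  calc _ = (2 * π) ^ ((N : ℝ) + -(N : ℝ) / 2) * t ^ (a + -a) / M := by
        rw [rpow_add h2π, rpow_add ht, rpow_natCast]; ring
    _ = _ := by rw [add_neg_cancel, rpow_zero, mul_one]; ring_nf

theorem fractional_heat_local_asymptotics_general
    (N : ℕ) (α : ℝ) (hα : 0 < α)
    (u₀ : EuclideanSpace ℝ (Fin N) → ℂ)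
    (hu₀L1 : Integrable u₀)
    (u0hat : EuclideanSpace ℝ (Fin N) → ℂ)
    (hu0hat : ∀ ω, u0hat ω
      = (((2 * π) ^ (-(N : ℝ) / 2) : ℝ) : ℂ)
        * ∫ x, u₀ x * Complex.exp (-(Complex.I * ((inner ℝ ω x : ℝ) : ℂ))))
    (u : ℝ → EuclideanSpace ℝ (Fin N) → ℂ)
    (hu : ∀ t, 0 < t → ∀ x, u t x
      = (((2 * π) ^ (-(N : ℝ) / 2) : ℝ) : ℂ)
        * ∫ ω, (Real.exp (-(t * ‖ω‖ ^ (2 * α))) : ℂ) * u0hat ω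
            * Complex.exp (Complex.I * ((inner ℝ ω x : ℝ) : ℂ)))
    (M : ℝ) (hM : M = ∫ s : EuclideanSpace ℝ (Fin N), Real.exp (-‖s‖ ^ (2 * α)))
    (c : ℝ → ℝ) (hc : ∀ t, c t = (2 * π) ^ (N : ℕ) * t ^ ((N : ℝ) / (2 * α)) / M)
    (K : Set (EuclideanSpace ℝ (Fin N))) (hK : IsCompact K) :
    TendstoUniformlyOn (fun t x => (c t : ℂ) * u t x)
      (fun _ => ∫ y, u₀ y) atTop K := by
  have hp : 0 < 2 * α := by positivity
  have h2π : 0 < 2 * π := by positivity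
  have hMpos : 0 < M := hM ▸ integral_exp_neg_norm_rpow_pos volume hp
  have hκ : (2 * π) ^ ((N : ℝ) / 2) * (2 * π) ^ (-(N : ℝ) / 2) = 1 := by
    rw [← rpow_add h2π, neg_div, add_neg_cancel, rpow_zero]
  have hû_cont : Continuous u0hat := by
    rw [funext hu0hat]; exact continuous_const.mul (continuous_integral_mul_exp_neg_inner hu₀L1)
  have hû_bdd : ∀ ω, ‖u0hat ω‖ ≤ (2 * π) ^ (-(N : ℝ) / 2) * ∫ x, ‖u₀ x‖ := fun ω => by
    rw [hu0hat, norm_mul, Complex.norm_real, Real.norm_of_nonneg (by positivity)]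
    exact mul_le_mul_of_nonneg_left (norm_integral_mul_exp_neg_inner_le ω) (by positivity)
  have hΦ := (continuous_rescaledHeatProfile volume hp hû_cont hû_bdd)
    |>.tendstoUniformlyOn_of_isCompact hK 0 |>.comp_tendsto (tendsto_rpow_neg_atTop (one_div_pos.2 hp))
  have hlim := (uniformContinuous_mul_left' ((((2 * π) ^ ((N : ℝ) / 2) / M : ℝ) : ℂ)))
    |>.comp_tendstoUniformlyOn hΦ
  refine (hlim.congr (eventually_gt_atTop 0 |>.mono fun t ht x _ => ?_)).congr_right fun x _ => ?_
  · dsimp only [Function.comp_apply]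
    rw [hu t ht x, integral_heat_eq_rescaledHeatProfile volume hp ht, finrank_euclideanSpace_fin,
      hc, ← heat_scaling_constant ht (a := N / (2 * α))]
    push_cast
    ring
  · dsimp only [Function.comp_apply]
    rw [rescaledHeatProfile_zero, ← hM, hu0hat 0]
    simp only [inner_zero_left, ofReal_zero, mul_zero, neg_zero, Complex.exp_zero, mul_one]
    rw [← mul_assoc, ← mul_assoc, ← ofReal_mul, ← ofReal_mul, div_mul_cancel₀ _ hMpos.ne', hκ,
      ofReal_one, one_mul]

/-- **Local asymptotic behaviour of the fractional/polyharmonic heat equation on ℝ^N.**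
For `u₀ ∈ L¹ ∩ L²(ℝ^N)`, the rescaled solution `c_t u(t,·)` of
`∂u/∂t + (-Δ)^α u = 0` converges, uniformly on every compact set `K`,
to the constant `∫ u₀`. -/
theorem fractional_heat_local_asymptotics
    (N : ℕ) (hN : 1 ≤ N) (α : ℝ) (hα : 0 < α)
    (u₀ : EuclideanSpace ℝ (Fin N) → ℂ)
    (hu₀L1 : Integrable u₀)
    (hu₀L2 : MemLp u₀ 2)
    (u0hat : EuclideanSpace ℝ (Fin N) → ℂ)
    (hu0hat : ∀ ω, u0hat ω
      = (((2 * π) ^ (-(N : ℝ) / 2) : ℝ) : ℂ)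
        * ∫ x, u₀ x * Complex.exp (-(Complex.I * ((inner ℝ ω x : ℝ) : ℂ))))
    (u : ℝ → EuclideanSpace ℝ (Fin N) → ℂ)
    (hu : ∀ t, 0 < t → ∀ x, u t x
      = (((2 * π) ^ (-(N : ℝ) / 2) : ℝ) : ℂ)
        * ∫ ω, (Real.exp (-(t * ‖ω‖ ^ (2 * α))) : ℂ) * u0hat ω
            * Complex.exp (Complex.I * ((inner ℝ ω x : ℝ) : ℂ)))
    (M : ℝ) (hM : M = ∫ s : EuclideanSpace ℝ (Fin N), Real.exp (-‖s‖ ^ (2 * α)))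
    (c : ℝ → ℝ) (hc : ∀ t, c t = (2 * π) ^ (N : ℕ) * t ^ ((N : ℝ) / (2 * α)) / M)
    (K : Set (EuclideanSpace ℝ (Fin N))) (hK : IsCompact K) :
    TendstoUniformlyOn (fun t x => (c t : ℂ) * u t x)
      (fun _ => ∫ y, u₀ y) atTop K :=
  fractional_heat_local_asymptotics_general N α hα u₀ hu₀L1 u0hat hu0hat u hu M hM c hc K hK
end

section
/- Let n ≥ 1 be an integer, α ≥ 0 a real number, and let p(x) = Σ_{j=k}^m c_j x^j be a polynomial with integer exponents m ≥ k ≥ 1 and real coefficients satisfying c_m > 0 and c_k > 0. Define f_α(t) = ∫₀^∞ x^α e^{-t x^n} dx and g(t) = ∫₀^∞ e^{-t p(x)} dx for t > 0. Then there exist constants C > 0 and t₀ > 0, depending only on α, n, k and the coefficients of p, such that f_α(t)/g(t) ≤ C t^{1/k − (α+1)/n} for all t ≥ t₀. -/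
/-!
Substituting into Euler's integral gives `f_α(t) = Γ((α+1)/n)/n · t^{-(α+1)/n}` exactly, so only a
lower bound for `g` is needed. On `[0, 1]` we have `p(x) ≤ B x^k` with `B = Σ |c_j|`, hence
`t p(x) ≤ B` for `x ≤ t^{-1/k}` and `g(t) ≥ e^{-B} t^{-1/k}` once `t ≥ 1`. The leading coefficient
enters only through `p(x) ≥ c_m x / 2` for large `x`, which makes `g(t)` a convergent integral
(a divergent Bochner integral would be `0`).
-/

open MeasureTheory Real Filter

section PolynomialBounds

variable {s : Finset ℕ} (c : ℕ → ℝ) {x : ℝ}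

theorem sum_mul_pow_le_of_le_one {k : ℕ} (hs : ∀ j ∈ s, k ≤ j) (hx₀ : 0 ≤ x) (hx₁ : x ≤ 1) :
    ∑ j ∈ s, c j * x ^ j ≤ (∑ j ∈ s, |c j|) * x ^ k := by
  rw [Finset.sum_mul]
  refine Finset.sum_le_sum fun j hj => ?_
  calc c j * x ^ j ≤ |c j| * x ^ j := by gcongr; exact le_abs_self _
    _ ≤ |c j| * x ^ k :=
      mul_le_mul_of_nonneg_left (pow_le_pow_of_le_one hx₀ hx₁ (hs j hj)) (abs_nonneg _)

theorem sub_le_sum_mul_pow_of_one_le {m : ℕ} (hm : m ∈ s) (hs : ∀ j ∈ s, j ≤ m) (hx : 1 ≤ x) :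
    c m * x ^ m - (∑ j ∈ s.erase m, |c j|) * x ^ (m - 1) ≤ ∑ j ∈ s, c j * x ^ j := by
  have hlower : -((∑ j ∈ s.erase m, |c j|) * x ^ (m - 1)) ≤ ∑ j ∈ s.erase m, c j * x ^ j := by
    rw [Finset.sum_mul, ← Finset.sum_neg_distrib]
    refine Finset.sum_le_sum fun j hj => ?_
    have hjm : j ≤ m - 1 := by
      have := hs j (Finset.mem_of_mem_erase hj)
      have := Finset.ne_of_mem_erase hj
      omega
    calc -(|c j| * x ^ (m - 1)) ≤ -|c j| * x ^ j := by
          rw [neg_mul]; gcongr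
      _ ≤ c j * x ^ j := by gcongr; exact neg_abs_le _
  rw [← Finset.add_sum_erase s _ hm]
  linarith

theorem eventually_mul_le_sum_mul_pow {m : ℕ} (hm : m ∈ s) (hs : ∀ j ∈ s, j ≤ m) (hm₁ : 1 ≤ m)
    (hcm : 0 < c m) : ∀ᶠ x in atTop, c m / 2 * x ≤ ∑ j ∈ s, c j * x ^ j := by
  set B := ∑ j ∈ s.erase m, |c j|
  filter_upwards [eventually_ge_atTop 1, eventually_ge_atTop (2 * B / c m)] with x hx₁ hxB
  have hB : B ≤ c m / 2 * x := by
    rw [div_le_iff₀ hcm] at hxB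
    linarith
  have hpow : x ^ m = x ^ (m - 1) * x := by rw [← pow_succ, Nat.sub_add_cancel hm₁]
  have hpow₁ : 1 ≤ x ^ (m - 1) := one_le_pow₀ hx₁
  calc c m / 2 * x ≤ x ^ (m - 1) * (c m / 2 * x) := le_mul_of_one_le_left (by positivity) hpow₁
    _ ≤ c m * x ^ m - B * x ^ (m - 1) := by
      rw [hpow]; nlinarith [mul_le_mul_of_nonneg_left hB (by positivity : 0 ≤ x ^ (m - 1))]
    _ ≤ ∑ j ∈ s, c j * x ^ j := sub_le_sum_mul_pow_of_one_le c hm hs hx₁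

end PolynomialBounds

section LaplaceIntegrals

variable {p : ℝ → ℝ} {t : ℝ}

theorem integrableOn_exp_neg_mul_of_eventually_mul_le (hp : Continuous p) {a : ℝ} (ha : 0 < a)
    (hpa : ∀ᶠ x in atTop, a * x ≤ p x) (ht : 0 < t) (x₀ : ℝ) :
    IntegrableOn (fun x => exp (-(t * p x))) (Set.Ioi x₀) := by
  refine integrable_of_isBigO_exp_neg (b := t * a) (by positivity) (by fun_prop) ?_
  refine Asymptotics.IsBigO.of_bound 1 (hpa.mono fun x hx => ?_)
  rw [one_mul, Real.norm_of_nonneg (exp_pos _).le, Real.norm_of_nonneg (exp_pos _).le]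
  gcongr
  nlinarith

theorem exp_neg_div_rpow_le_integral_exp_neg_mul {B : ℝ} {k : ℕ} (hk : 1 ≤ k) (hB : 0 ≤ B)
    (hpB : ∀ x ∈ Set.Icc (0 : ℝ) 1, p x ≤ B * x ^ k) (ht : 1 ≤ t)
    (hint : IntegrableOn (fun x => exp (-(t * p x))) (Set.Ioi 0)) :
    exp (-B) / t ^ ((1 : ℝ) / k) ≤ ∫ x in Set.Ioi 0, exp (-(t * p x)) := by
  set r := (t ^ ((1 : ℝ) / k))⁻¹
  have hr₀ : 0 < r := inv_pos.2 (by positivity)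
  have hr₁ : r ≤ 1 := inv_le_one_of_one_le₀ (Real.one_le_rpow ht (by positivity))
  have hrk : r ^ k = t⁻¹ := by
    rw [inv_pow, one_div, Real.rpow_inv_natCast_pow (by positivity) (by omega)]
  -- on `(0, r]` the exponent `t p(x)` is at most `t B r^k = B`
  have hbound : ∀ x ∈ Set.Ioc 0 r, exp (-B) ≤ exp (-(t * p x)) := fun x hx => by
    have hxk : t * x ^ k ≤ 1 := by
      calc t * x ^ k ≤ t * r ^ k := by gcongr; exacts [hx.1.le, hx.2]
        _ = 1 := by rw [hrk]; field_simp
    have := hpB x ⟨hx.1.le, hx.2.trans hr₁⟩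
    gcongr
    nlinarith
  calc exp (-B) / t ^ ((1 : ℝ) / k) = ∫ _ in Set.Ioc 0 r, exp (-B) := by
        rw [setIntegral_const, Real.volume_real_Ioc_of_le hr₀.le, smul_eq_mul, sub_zero]
        ring
    _ ≤ ∫ x in Set.Ioc 0 r, exp (-(t * p x)) :=
        setIntegral_mono_on (integrableOn_const measure_Ioc_lt_top.ne)
          (hint.mono_set Set.Ioc_subset_Ioi_self) measurableSet_Ioc hbound
    _ ≤ ∫ x in Set.Ioi 0, exp (-(t * p x)) :=
        setIntegral_mono_set hint (ae_of_all _ fun x => (exp_pos _).le)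
          Set.Ioc_subset_Ioi_self.eventuallyLE

end LaplaceIntegrals

theorem laplace_integral_ratio_bound_general
    (n : ℕ) (hn : 1 ≤ n) (α : ℝ) (hα : 0 ≤ α)
    (k m : ℕ) (hk : 1 ≤ k) (hkm : k ≤ m)
    (c : ℕ → ℝ) (hcm : 0 < c m)
    (p : ℝ → ℝ) (hp : ∀ x, p x = ∑ j ∈ Finset.Icc k m, c j * x ^ j)
    (f : ℝ → ℝ) (hf : ∀ t, f t = ∫ x in Set.Ioi (0 : ℝ), x ^ α * Real.exp (-(t * x ^ n)))
    (g : ℝ → ℝ) (hg : ∀ t, g t = ∫ x in Set.Ioi (0 : ℝ), Real.exp (-(t * p x))) :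
    ∃ C : ℝ, 0 < C ∧ ∃ t₀ : ℝ, 0 < t₀ ∧
      ∀ t : ℝ, t₀ ≤ t →
        f t / g t ≤ C * t ^ ((1 : ℝ) / k - (α + 1) / n) := by
  obtain rfl : p = fun x => ∑ j ∈ Finset.Icc k m, c j * x ^ j := funext hp
  set B := ∑ j ∈ Finset.Icc k m, |c j|
  set K := 1 / (n : ℝ) * Gamma ((α + 1) / n)
  have hK : 0 < K := by
    have : 0 < Gamma ((α + 1) / n) := Gamma_pos_of_pos (by positivity)
    positivity
  have hf_eq (t : ℝ) (ht : 0 < t) : f t = t ^ (-(α + 1) / n) * K := by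
    simp_rw [hf, ← rpow_natCast _ n, ← neg_mul]
    rw [integral_rpow_mul_exp_neg_mul_rpow (by positivity) (by linarith) ht, mul_assoc]
  have hg_lower (t : ℝ) (ht : 1 ≤ t) : exp (-B) / t ^ ((1 : ℝ) / k) ≤ g t := by
    have hint := integrableOn_exp_neg_mul_of_eventually_mul_le (by fun_prop) (half_pos hcm)
      (eventually_mul_le_sum_mul_pow c (Finset.right_mem_Icc.2 hkm)
        (fun j hj => (Finset.mem_Icc.1 hj).2) (hk.trans hkm) hcm) (by linarith) 0
    exact hg t ▸ exp_neg_div_rpow_le_integral_exp_neg_mul hk (by positivity)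
      (fun x hx => sum_mul_pow_le_of_le_one c (fun j hj => (Finset.mem_Icc.1 hj).1) hx.1 hx.2)
      ht hint
  refine ⟨K * exp B, by positivity, 1, one_pos, fun t ht => ?_⟩
  have ht₀ : 0 < t := one_pos.trans_le ht
  calc f t / g t ≤ f t / (exp (-B) / t ^ ((1 : ℝ) / k)) :=
        div_le_div_of_nonneg_left (by rw [hf_eq t ht₀]; positivity) (by positivity) (hg_lower t ht)
    _ = K * exp B * t ^ ((1 : ℝ) / k - (α + 1) / n) := by
        rw [hf_eq t ht₀, sub_eq_add_neg, ← neg_div, rpow_add ht₀, exp_neg]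
        field_simp

/-- **Comparison of Laplace-type integrals.**
For `p(x) = Σ_{j=k}^m c_j x^j` with `m ≥ k ≥ 1`, `c_m > 0`, `c_k > 0`,
`f_α(t) = ∫₀^∞ x^α e^{-t xⁿ} dx` and `g(t) = ∫₀^∞ e^{-t p(x)} dx`, there are
`C, t₀ > 0`, depending only on `α, n, k` and the coefficients of `p`, with
`f_α(t)/g(t) ≤ C t^{1/k - (α+1)/n}` for all `t ≥ t₀`. -/
theorem laplace_integral_ratio_bound
    (n : ℕ) (hn : 1 ≤ n) (α : ℝ) (hα : 0 ≤ α)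
    (k m : ℕ) (hk : 1 ≤ k) (hkm : k ≤ m)
    (c : ℕ → ℝ) (hcm : 0 < c m) (hck : 0 < c k)
    (p : ℝ → ℝ) (hp : ∀ x, p x = ∑ j ∈ Finset.Icc k m, c j * x ^ j)
    (f : ℝ → ℝ) (hf : ∀ t, f t = ∫ x in Set.Ioi (0 : ℝ), x ^ α * Real.exp (-(t * x ^ n)))
    (g : ℝ → ℝ) (hg : ∀ t, g t = ∫ x in Set.Ioi (0 : ℝ), Real.exp (-(t * p x))) :
    ∃ C : ℝ, 0 < C ∧ ∃ t₀ : ℝ, 0 < t₀ ∧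
      ∀ t : ℝ, t₀ ≤ t →
        f t / g t ≤ C * t ^ ((1 : ℝ) / k - (α + 1) / n) :=
  laplace_integral_ratio_bound_general n hn α hα k m hk hkm c hcm p hp f hf g hg
end

section
/- Let α₁ > 0, set β = 2√α₁, and let μ : ℝ → ℝ be a measurable function satisfying α₁ + ω⁴ ≤ μ(ω) ≤ α₁ + β ω² + ω⁴ for all ω ∈ ℝ. For t > 0 define φ_t(ω) = e^{-t μ(ω)} / ∫_ℝ e^{-t μ(η)} dη. Then (φ_t)_{t>0} is an approximate identity as t → ∞ on ℝ: (i) 0 < ∫_ℝ e^{-t μ(η)} dη < ∞ so φ_t is well defined and φ_t(ω) ≥ 0 for all ω; (ii) ∫_ℝ φ_t(ω) dω = 1 for all t > 0; (iii) for every δ > 0, ∫_{|ω| ≥ δ} φ_t(ω) dω → 0 as t → ∞ (indeed ∫_{|ω|≥δ} φ_t(ω) dω ≤ C t^{-1/4} for t large, with C depending on δ and α₁). -/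
/-!
The two quartic bounds share the value `α₁` at `ω = 0`, so the factor `e^{-tα₁}` cancels in `φ_t`.
On `|ω| ≥ δ` the lower bound gives `μ ω ≥ α₁ + δ⁴/2 + (δ²/2) ω²`, so the tail of the numerator is at
most `e^{-t(α₁ + δ⁴/2)}` times a Gaussian integral of size `O(t^{-1/2})`. On `(0, t^{-1/2}]` the upper
bound gives `tμ ≤ tα₁ + |β| + 1`, so the denominator is at least `e^{-(tα₁ + |β| + 1)} t^{-1/2}`.
The powers of `t` cancel and the tail mass of `φ_t` is `O(e^{-tδ⁴/2})`, far better than `t^{-1/4}`.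
-/

open MeasureTheory Filter Real

section QuarticBounds

variable {μ : ℝ → ℝ} {α β t δ : ℝ}

lemma exp_neg_mul_le_exp_neg_mul {a b : ℝ} (ht : 0 ≤ t) (hab : a ≤ b) :
    exp (-(t * b)) ≤ exp (-(t * a)) :=
  exp_le_exp.mpr (neg_le_neg (mul_le_mul_of_nonneg_left hab ht))

lemma integrable_exp_neg_mul_of_quartic_le (hμ : Measurable μ)
    (hlb : ∀ ω, α + ω ^ 4 ≤ μ ω) (ht : 0 < t) :
    Integrable fun ω => exp (-(t * μ ω)) := by
  refine ((integrable_exp_neg_mul_sq ht).const_mul (exp (t / 4 - t * α))).mono'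
    (by fun_prop) (ae_of_all _ fun ω => ?_)
  rw [norm_of_nonneg (exp_nonneg _), ← exp_add]
  have hquad : α + ω ^ 2 - 1 / 4 ≤ μ ω := by nlinarith [hlb ω, sq_nonneg (ω ^ 2 - 1 / 2)]
  calc exp (-(t * μ ω)) ≤ exp (-(t * (α + ω ^ 2 - 1 / 4))) := exp_neg_mul_le_exp_neg_mul ht.le hquad
    _ = exp (t / 4 - t * α + -t * ω ^ 2) := by ring_nf

lemma setIntegral_exp_neg_mul_le_of_quartic_le (hμ : Measurable μ)
    (hlb : ∀ ω, α + ω ^ 4 ≤ μ ω) (ht : 0 < t) (hδ : 0 < δ) :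
    ∫ ω in {ω : ℝ | δ ≤ |ω|}, exp (-(t * μ ω))
      ≤ exp (-(t * α + t * δ ^ 4 / 2)) * √(π / (t * δ ^ 2 / 2)) := by
  have hgauss : Integrable fun ω : ℝ =>
      exp (-(t * α + t * δ ^ 4 / 2)) * exp (-(t * δ ^ 2 / 2) * ω ^ 2) :=
    (integrable_exp_neg_mul_sq (by positivity)).const_mul _
  have htail : ∀ ω ∈ {ω : ℝ | δ ≤ |ω|},
      exp (-(t * μ ω)) ≤ exp (-(t * α + t * δ ^ 4 / 2)) * exp (-(t * δ ^ 2 / 2) * ω ^ 2) := by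
    intro ω hω
    have hδω : δ ^ 2 ≤ ω ^ 2 := sq_abs ω ▸ pow_le_pow_left₀ hδ.le hω 2
    -- `ω⁴ - δ⁴/2 - δ²ω²/2 = (ω² - δ²)(ω² + δ²/2)`
    have hsplit : α + δ ^ 4 / 2 + δ ^ 2 / 2 * ω ^ 2 ≤ μ ω := by
      nlinarith [hlb ω, mul_nonneg (sub_nonneg.mpr hδω) (sq_nonneg ω)]
    rw [← exp_add]
    calc exp (-(t * μ ω)) ≤ exp (-(t * (α + δ ^ 4 / 2 + δ ^ 2 / 2 * ω ^ 2))) :=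
          exp_neg_mul_le_exp_neg_mul ht.le hsplit
      _ = _ := by ring_nf
  calc ∫ ω in {ω : ℝ | δ ≤ |ω|}, exp (-(t * μ ω))
      ≤ ∫ ω in {ω : ℝ | δ ≤ |ω|},
          exp (-(t * α + t * δ ^ 4 / 2)) * exp (-(t * δ ^ 2 / 2) * ω ^ 2) :=
        setIntegral_mono_on (integrable_exp_neg_mul_of_quartic_le hμ hlb ht).integrableOn
          hgauss.integrableOn (measurableSet_le measurable_const measurable_abs) htail
    _ ≤ ∫ ω, exp (-(t * α + t * δ ^ 4 / 2)) * exp (-(t * δ ^ 2 / 2) * ω ^ 2) :=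
        setIntegral_le_integral hgauss (ae_of_all _ fun _ => by positivity)
    _ = _ := by rw [integral_const_mul, integral_gaussian]

lemma exp_div_sqrt_le_integral_exp_neg_mul (hμ : Measurable μ)
    (hlb : ∀ ω, α + ω ^ 4 ≤ μ ω) (hub : ∀ ω, μ ω ≤ α + β * ω ^ 2 + ω ^ 4) (ht : 1 ≤ t) :
    exp (-(t * α + |β| + 1)) / √t ≤ ∫ ω, exp (-(t * μ ω)) := by
  have ht₀ : 0 < t := one_pos.trans_le ht
  have hint := integrable_exp_neg_mul_of_quartic_le hμ hlb ht₀
  have hnear : ∀ ω ∈ Set.Ioc 0 (√t)⁻¹, exp (-(t * α + |β| + 1)) ≤ exp (-(t * μ ω)) := by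
    rintro ω ⟨hω₀, hω⟩
    have hω2 : t * ω ^ 2 ≤ 1 := by
      have hsq := pow_le_pow_left₀ hω₀.le hω 2
      rw [inv_pow, sq_sqrt ht₀.le] at hsq
      calc t * ω ^ 2 ≤ t * t⁻¹ := by gcongr
        _ = 1 := mul_inv_cancel₀ ht₀.ne'
    have hω2' : ω ^ 2 ≤ 1 := by nlinarith
    refine exp_le_exp.mpr (neg_le_neg ?_)
    calc t * μ ω ≤ t * (α + β * ω ^ 2 + ω ^ 4) := mul_le_mul_of_nonneg_left (hub ω) ht₀.le
      _ = t * α + β * (t * ω ^ 2) + (t * ω ^ 2) * ω ^ 2 := by ring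
      _ ≤ t * α + |β| * 1 + 1 * 1 := by
        gcongr
        exact le_abs_self β
      _ = t * α + |β| + 1 := by ring
  calc exp (-(t * α + |β| + 1)) / √t
      = exp (-(t * α + |β| + 1)) * volume.real (Set.Ioc 0 (√t)⁻¹) := by
        rw [Real.volume_real_Ioc_of_le (by positivity), sub_zero, div_eq_mul_inv]
    _ ≤ ∫ ω in Set.Ioc 0 (√t)⁻¹, exp (-(t * μ ω)) :=
        setIntegral_ge_of_const_le_real measurableSet_Ioc measure_Ioc_lt_top.ne hnear
          hint.integrableOn
    _ ≤ ∫ ω, exp (-(t * μ ω)) := setIntegral_le_integral hint (ae_of_all _ fun _ => by positivity)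

lemma tail_div_integral_exp_neg_mul_le (hμ : Measurable μ)
    (hlb : ∀ ω, α + ω ^ 4 ≤ μ ω) (hub : ∀ ω, μ ω ≤ α + β * ω ^ 2 + ω ^ 4)
    (ht : 1 ≤ t) (hδ : 0 < δ) :
    (∫ ω in {ω : ℝ | δ ≤ |ω|}, exp (-(t * μ ω))) / ∫ ω, exp (-(t * μ ω))
      ≤ exp (|β| + 1) * √(2 * π / δ ^ 2) * exp (-(δ ^ 4 / 2 * t)) := by
  have ht₀ : 0 < t := one_pos.trans_le ht
  calc (∫ ω in {ω : ℝ | δ ≤ |ω|}, exp (-(t * μ ω))) / ∫ ω, exp (-(t * μ ω))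
      ≤ exp (-(t * α + t * δ ^ 4 / 2)) * √(π / (t * δ ^ 2 / 2))
          / (exp (-(t * α + |β| + 1)) / √t) :=
        div_le_div₀ (by positivity) (setIntegral_exp_neg_mul_le_of_quartic_le hμ hlb ht₀ hδ)
          (by positivity) (exp_div_sqrt_le_integral_exp_neg_mul hμ hlb hub ht)
    _ = exp (-(t * α + t * δ ^ 4 / 2) - -(t * α + |β| + 1)) * (√(π / (t * δ ^ 2 / 2)) * √t) := by
        rw [exp_sub]
        field_simp
    _ = _ := by
        have hsqrt : √(π / (t * δ ^ 2 / 2)) * √t = √(2 * π / δ ^ 2) := by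
          rw [← sqrt_mul (by positivity)]
          congr 1
          field_simp
        rw [hsqrt, show -(t * α + t * δ ^ 4 / 2) - -(t * α + |β| + 1)
          = |β| + 1 + -(δ ^ 4 / 2 * t) by ring, exp_add]
        ring

end QuarticBounds

lemma eventually_exp_neg_mul_le_rpow {c : ℝ} (hc : 0 < c) (s : ℝ) :
    ∀ᶠ t in atTop, exp (-(c * t)) ≤ t ^ s := by
  filter_upwards [(tendsto_rpow_mul_exp_neg_mul_atTop_nhds_zero (-s) c hc).eventually
    (gt_mem_nhds one_pos), eventually_gt_atTop 0] with t hlt hpos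
  rw [rpow_neg hpos.le, neg_mul, inv_mul_eq_div, div_lt_one (by positivity)] at hlt
  exact hlt.le

theorem mu_kernels_approximate_identity_general
    (α₁ : ℝ) (β : ℝ)
    (μ : ℝ → ℝ) (hμ_meas : Measurable μ)
    (hμ_lb : ∀ ω : ℝ, α₁ + ω ^ 4 ≤ μ ω)
    (hμ_ub : ∀ ω : ℝ, μ ω ≤ α₁ + β * ω ^ 2 + ω ^ 4)
    (φ : ℝ → ℝ → ℝ)
    (hφ : ∀ t ω, φ t ω = Real.exp (-(t * μ ω)) / ∫ η : ℝ, Real.exp (-(t * μ η))) :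
    (∀ t : ℝ, 0 < t →
      Integrable (fun η : ℝ => Real.exp (-(t * μ η))) ∧
      0 < ∫ η : ℝ, Real.exp (-(t * μ η)) ∧
      ∀ ω : ℝ, 0 ≤ φ t ω) ∧
    (∀ t : ℝ, 0 < t → ∫ ω : ℝ, φ t ω = 1) ∧
    (∀ δ : ℝ, 0 < δ →
      Tendsto (fun t => ∫ ω in {ω : ℝ | δ ≤ |ω|}, φ t ω) atTop (nhds 0) ∧
      ∃ C : ℝ, 0 < C ∧ ∃ t₀ : ℝ, 0 < t₀ ∧
        ∀ t : ℝ, t₀ ≤ t →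
          (∫ ω in {ω : ℝ | δ ≤ |ω|}, φ t ω) ≤ C * t ^ (-(1 : ℝ) / 4)) := by
  have hφ_eq : ∀ t, φ t = fun ω => exp (-(t * μ ω)) / ∫ η, exp (-(t * μ η)) :=
    fun t => funext (hφ t)
  have hint : ∀ t, 0 < t → Integrable fun η => exp (-(t * μ η)) :=
    fun t ht => integrable_exp_neg_mul_of_quartic_le hμ_meas hμ_lb ht
  have hpos : ∀ t, 0 < t → 0 < ∫ η, exp (-(t * μ η)) := fun t ht => integral_exp_pos (hint t ht)
  have hφ_nonneg : ∀ t, 0 < t → ∀ ω, 0 ≤ φ t ω := fun t ht ω =>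
    (hφ t ω).symm ▸ div_nonneg (exp_nonneg _) (hpos t ht).le
  refine ⟨fun t ht => ⟨hint t ht, hpos t ht, hφ_nonneg t ht⟩,
    fun t ht => by rw [hφ_eq, integral_div, div_self (hpos t ht).ne'], fun δ hδ => ?_⟩
  obtain ⟨t₁, hrate⟩ := eventually_atTop.mp
    (eventually_exp_neg_mul_le_rpow (c := δ ^ 4 / 2) (by positivity) (-1 / 4))
  set C := exp (|β| + 1) * √(2 * π / δ ^ 2)
  have hbound : ∀ t, max 1 t₁ ≤ t → ∫ ω in {ω : ℝ | δ ≤ |ω|}, φ t ω ≤ C * t ^ (-(1 : ℝ) / 4) := by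
    intro t ht
    rw [hφ_eq, integral_div]
    exact (tail_div_integral_exp_neg_mul_le hμ_meas hμ_lb hμ_ub (le_of_max_le_left ht) hδ).trans
      (mul_le_mul_of_nonneg_left (hrate t (le_of_max_le_right ht)) (by positivity))
  refine ⟨squeeze_zero' ?_ (eventually_atTop.mpr ⟨_, hbound⟩) ?_, C, by positivity, max 1 t₁,
    by positivity, hbound⟩
  · filter_upwards [eventually_gt_atTop 0] with t ht
    exact setIntegral_nonneg (measurableSet_le measurable_const measurable_abs)
      fun ω _ => hφ_nonneg t ht ω
  · simpa [neg_div] using (tendsto_rpow_neg_atTop (by norm_num : (0 : ℝ) < 1 / 4)).const_mul C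

/-- **The normalised kernels `e^{-tμ(ω)} / ∫ e^{-tμ}` form an approximate identity.**
If the measurable function `μ : ℝ → ℝ` satisfies
`α₁ + ω⁴ ≤ μ(ω) ≤ α₁ + 2√α₁ ω² + ω⁴`, then `φ_t(ω) = e^{-tμ(ω)} / ∫ e^{-tμ(η)} dη`
is well defined, non-negative, has total integral `1`, and for every `δ > 0` the
tail mass `∫_{|ω|≥δ} φ_t` tends to `0` as `t → ∞`, indeed with rate `C t^{-1/4}`. -/
theorem mu_kernels_approximate_identity
    (α₁ : ℝ) (hα₁ : 0 < α₁) (β : ℝ) (hβ : β = 2 * Real.sqrt α₁)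
    (μ : ℝ → ℝ) (hμ_meas : Measurable μ)
    (hμ_lb : ∀ ω : ℝ, α₁ + ω ^ 4 ≤ μ ω)
    (hμ_ub : ∀ ω : ℝ, μ ω ≤ α₁ + β * ω ^ 2 + ω ^ 4)
    (φ : ℝ → ℝ → ℝ)
    (hφ : ∀ t ω, φ t ω = Real.exp (-(t * μ ω)) / ∫ η : ℝ, Real.exp (-(t * μ η))) :
    (∀ t : ℝ, 0 < t →
      Integrable (fun η : ℝ => Real.exp (-(t * μ η))) ∧
      0 < ∫ η : ℝ, Real.exp (-(t * μ η)) ∧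
      ∀ ω : ℝ, 0 ≤ φ t ω) ∧
    (∀ t : ℝ, 0 < t → ∫ ω : ℝ, φ t ω = 1) ∧
    (∀ δ : ℝ, 0 < δ →
      Tendsto (fun t => ∫ ω in {ω : ℝ | δ ≤ |ω|}, φ t ω) atTop (nhds 0) ∧
      ∃ C : ℝ, 0 < C ∧ ∃ t₀ : ℝ, 0 < t₀ ∧
        ∀ t : ℝ, t₀ ≤ t →
          (∫ ω in {ω : ℝ | δ ≤ |ω|}, φ t ω) ≤ C * t ^ (-(1 : ℝ) / 4)) :=
  mu_kernels_approximate_identity_general α₁ β μ hμ_meas hμ_lb hμ_ub φ hφ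
end
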